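/- arXiv:1710.05326 — 6 statements merged into one kernel-verified Lean document; each statement's English description precedes it below -/
import Mathlib

section
/- Let p be an odd prime and let St^{(i,j)} denote the Steenrod–Milnor operations on F_p[y₁,y₂]. Then St^{(i,j)}(L₂) is given as follows: it equals L₂ if (i,j)=(0,0); −L₂·Q_{2,0} if (i,j)=(0,1); L₂·(Q_{2,1}^{p+1} − Q_{2,0}^p) if (i,j)=(0,p); L₂·Q_{2,0}^{p+1} if (i,j)=(0,p+1); L₂·Q_{2,0}·Q_{2,1}^p if (i,j)=(1,p); L₂·Q_{2,1} if (i,j)=(p,0); L₂·Q_{2,0} if (i,j)=(p+1,0); and 0 for all other pairs (i,j) of nonnegative integers. -/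
open MvPolynomial Finset

/-- The total Steenrod-Milnor operation `φ : R → R[t₁,t₂]`,
sending `y_k ↦ y_k + y_k^p t₁ + y_k^{p²} t₂`. Here `R = F_p[y₁,y₂]`
and `R[t₁,t₂]` is modelled as `MvPolynomial (Fin 2) R`. -/
noncomputable def phi (p : ℕ) :
    MvPolynomial (Fin 2) (ZMod p) →ₐ[ZMod p]
      MvPolynomial (Fin 2) (MvPolynomial (Fin 2) (ZMod p)) :=
  aeval (fun k => C (X k) + C (X k ^ p) * X 0 + C (X k ^ (p ^ 2)) * X 1)

/-- The Steenrod-Milnor operation `St^{(i,j)}` : the coefficient of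
`t₁^i t₂^j` in `φ f`. -/
noncomputable def St (p i j : ℕ) (f : MvPolynomial (Fin 2) (ZMod p)) :
    MvPolynomial (Fin 2) (ZMod p) :=
  coeff (Finsupp.single (0 : Fin 2) i + Finsupp.single (1 : Fin 2) j) (phi p f)

/-- `L₂ = y₁ y₂^p - y₁^p y₂`. -/
noncomputable def L2 (p : ℕ) : MvPolynomial (Fin 2) (ZMod p) :=
  X 0 * X 1 ^ p - X 0 ^ p * X 1

/-- `L_{2,0} = y₁^p y₂^{p²} - y₁^{p²} y₂^p`. -/
noncomputable def L20 (p : ℕ) : MvPolynomial (Fin 2) (ZMod p) :=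
  X 0 ^ p * X 1 ^ (p ^ 2) - X 0 ^ (p ^ 2) * X 1 ^ p

/-- `L_{2,1} = y₁ y₂^{p²} - y₁^{p²} y₂`. -/
noncomputable def L21 (p : ℕ) : MvPolynomial (Fin 2) (ZMod p) :=
  X 0 * X 1 ^ (p ^ 2) - X 0 ^ (p ^ 2) * X 1

lemma pair_eq (a b i j : ℕ) :
    (Finsupp.single (0 : Fin 2) a + Finsupp.single (1 : Fin 2) b =
      Finsupp.single (0 : Fin 2) i + Finsupp.single (1 : Fin 2) j) ↔ (a = i ∧ b = j) := by
  constructor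
  · intro h
    have h0 := DFunLike.congr_fun h 0
    have h1 := DFunLike.congr_fun h 1
    simp [Finsupp.single_apply] at h0 h1
    exact ⟨h0, h1⟩
  · rintro ⟨rfl, rfl⟩; rfl

lemma coeff_term {R : Type*} [CommSemiring R] (m : R) (a b i j : ℕ) :
    coeff (Finsupp.single (0 : Fin 2) i + Finsupp.single (1 : Fin 2) j)
      (C m * X 0 ^ a * X 1 ^ b : MvPolynomial (Fin 2) R) =
      if (i, j) = (a, b) then m else 0 := by
  rw [mul_assoc, X_pow_eq_monomial, X_pow_eq_monomial, monomial_mul, coeff_C_mul,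
    coeff_monomial, one_mul]
  by_cases h : a = i ∧ b = j
  · obtain ⟨rfl, rfl⟩ := h
    rw [if_pos rfl, if_pos rfl, mul_one]
  · rw [if_neg (fun hh => h ((pair_eq _ _ _ _).mp hh)), if_neg, mul_zero]
    simp only [Prod.mk.injEq]
    tauto

lemma phiL2 (p : ℕ) (hp : p.Prime) :
    phi p (L2 p) =
      C (L2 p) * X 0 ^ 0 * X 1 ^ 0
      + C (-(L20 p)) * X 0 ^ 0 * X 1 ^ 1
      + C (X 0 * X 1 ^ (p ^ 3) - X 0 ^ (p ^ 3) * X 1) * X 0 ^ 0 * X 1 ^ p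
      + C ((L20 p) ^ p) * X 0 ^ 0 * X 1 ^ (p + 1)
      + C ((L21 p) ^ p) * X 0 ^ 1 * X 1 ^ p
      + C (L21 p) * X 0 ^ p * X 1 ^ 0
      + C (L20 p) * X 0 ^ (p + 1) * X 1 ^ 0 := by
  haveI := Fact.mk hp
  simp only [phi, L2, L20, L21, map_sub, map_mul, map_pow, aeval_X]
  simp only [add_pow_char, sub_pow_char, mul_pow, map_sub, map_mul, map_pow, map_neg]
  ring

lemma L2_ne_zero (p : ℕ) (hp : p.Prime) (hp3 : 3 ≤ p) : L2 p ≠ 0 := by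
  haveI := Fact.mk hp
  intro h0
  have e : L2 p = C (1 : ZMod p) * X 0 ^ 1 * X 1 ^ p - C (1 : ZMod p) * X 0 ^ p * X 1 ^ 1 := by
    simp [L2]
  have h1 : coeff (Finsupp.single (0 : Fin 2) 1 + Finsupp.single (1 : Fin 2) p) (L2 p)
      = 1 := by
    rw [e, coeff_sub, coeff_term, coeff_term, if_pos rfl, if_neg, sub_zero]
    simp only [Prod.mk.injEq]
    omega
  rw [h0] at h1
  simp at h1

theorem st_L2 (p : ℕ) (hp : p.Prime) (hodd : Odd p)
    (Q0 Q1 : MvPolynomial (Fin 2) (ZMod p))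
    (hQ0 : Q0 * L2 p = L20 p) (hQ1 : Q1 * L2 p = L21 p)
    (i j : ℕ) :
    St p i j (L2 p) =
      if (i, j) = (0, 0) then L2 p
      else if (i, j) = (0, 1) then -(L2 p * Q0)
      else if (i, j) = (0, p) then L2 p * (Q1 ^ (p + 1) - Q0 ^ p)
      else if (i, j) = (0, p + 1) then L2 p * Q0 ^ (p + 1)
      else if (i, j) = (1, p) then L2 p * Q0 * Q1 ^ p
      else if (i, j) = (p, 0) then L2 p * Q1
      else if (i, j) = (p + 1, 0) then L2 p * Q0
      else 0 := by
  haveI := Fact.mk hp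
  have hp3 : 3 ≤ p := by
    have h2 := hp.two_le
    have := Nat.odd_iff.mp hodd
    omega
  have hL2 : L2 p ≠ 0 := L2_ne_zero p hp hp3
  -- Frobenius identities
  have hfrob : L2 p ^ p = L20 p := by
    haveI := Fact.mk hp
    simp only [L2, L20, sub_pow_char, mul_pow, ← pow_mul]
    ring
  -- Q0 is an explicit power of L2
  have hQ0' : Q0 = L2 p ^ (p - 1) := by
    apply mul_right_cancel₀ hL2
    rw [hQ0, ← hfrob, ← pow_succ]
    congr 1
    omega
  -- key identity for the (0, p) case
  have hM03 : (X 0 * X 1 ^ (p ^ 3) - X 0 ^ (p ^ 3) * X 1 : MvPolynomial (Fin 2) (ZMod p))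
      * L2 p ^ p = L21 p ^ (p + 1) - (L2 p ^ p) ^ p * L2 p := by
    simp only [L2, L21, pow_succ, sub_pow_char, mul_pow, ← pow_mul]
    ring
  rw [St, phiL2 p hp]
  simp only [coeff_add, coeff_term]
  obtain ⟨q, rfl⟩ : ∃ q, p = q + 1 := ⟨p - 1, by omega⟩
  simp only [Nat.add_sub_cancel] at hQ0'
  simp only [Prod.mk.injEq]
  split_ifs <;> try omega
  · simp
  · simp only [zero_add]
    rw [← hQ0]; ring
  · -- (0, p) case
    simp only [zero_add, add_zero]
    apply mul_right_cancel₀ (pow_ne_zero (q + 1) hL2)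
    have expand : L2 (q+1) * (Q1 ^ (q + 1 + 1) - Q0 ^ (q + 1)) * L2 (q+1) ^ (q + 1)
        = (Q1 * L2 (q+1)) ^ (q + 1 + 1) - (Q0 * L2 (q+1)) ^ (q + 1) * L2 (q+1) := by
      ring
    rw [hM03, expand, hQ1, hQ0, ← hfrob]
  · -- (0, p+1) case
    simp only [zero_add, add_zero]
    rw [hQ0', ← hfrob]; ring
  · -- (1, p) case
    simp only [zero_add, add_zero]
    rw [← hQ1, hQ0']; ring
  · simp only [zero_add, add_zero]
    rw [← hQ1]; ring
  · simp only [zero_add]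
    rw [← hQ0]; ring
  · simp
end

section
/- Let p be an odd prime and let St^{(i,j)} denote the Steenrod–Milnor operations on F_p[y₁,y₂]. Then St^{(i,j)}(L_{2,0}) is given as follows: it equals L₂·Q_{2,0} if (i,j)=(0,0); −L₂·Q_{2,0}^{p+1} if (i,j)=(0,p); L₂·(Q_{2,0}·Q_{2,1}^{p²+p} − Q_{2,0}^{p²+1}) if (i,j)=(0,p²); L₂·Q_{2,0}^{p²+p+1} if (i,j)=(0,p²+p); L₂·Q_{2,0}^{p+1}·Q_{2,1}^{p²} if (i,j)=(p,p²); L₂·Q_{2,0}·Q_{2,1}^p if (i,j)=(p²,0); L₂·Q_{2,0}^{p+1} if (i,j)=(p²+p,0); and 0 for all other pairs (i,j) of nonnegative integers. -/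
open MvPolynomial Finset

lemma pair_eq_aux {a b i j : ℕ} :
    (Finsupp.single (0 : Fin 2) a + Finsupp.single 1 b
      = Finsupp.single (0 : Fin 2) i + Finsupp.single 1 j) ↔ (i = a ∧ j = b) := by
  constructor
  · intro h
    have h0 := DFunLike.congr_fun h 0
    have h1 := DFunLike.congr_fun h 1
    simp [Finsupp.single_apply, show ((1:Fin 2) = 0) ↔ False by decide,
      show ((0:Fin 2) = 1) ↔ False by decide] at h0 h1
    exact ⟨h0.symm, h1.symm⟩
  · rintro ⟨rfl, rfl⟩; rfl

lemma coeff_CXX {A : Type*} [CommSemiring A] (c : A) (a b i j : ℕ) :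
    coeff (Finsupp.single (0 : Fin 2) i + Finsupp.single 1 j)
      ((C c * X 0 ^ a * X 1 ^ b : MvPolynomial (Fin 2) A)) =
      if i = a ∧ j = b then c else 0 := by
  rw [X_pow_eq_monomial, X_pow_eq_monomial, C_mul_monomial, monomial_mul]
  simp only [mul_one, coeff_monomial, pair_eq_aux]

lemma phi_X_pow_p (p : ℕ) (hp : p.Prime) (k : Fin 2) :
    (phi p (X k)) ^ p
      = C (X k ^ p) + C (X k ^ (p ^ 2)) * X 0 ^ p + C (X k ^ (p ^ 3)) * X 1 ^ p := by
  haveI : Fact p.Prime := ⟨hp⟩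
  have e2 : p * p = p ^ 2 := by ring
  have e3 : p ^ 2 * p = p ^ 3 := by ring
  simp only [phi, aeval_X]
  rw [add_pow_char, add_pow_char, mul_pow, mul_pow]
  simp only [← map_pow, ← pow_mul]
  rw [e2, e3]

lemma phi_X_pow_p2 (p : ℕ) (hp : p.Prime) (k : Fin 2) :
    (phi p (X k)) ^ (p ^ 2)
      = C (X k ^ (p ^ 2)) + C (X k ^ (p ^ 3)) * X 0 ^ (p ^ 2)
        + C (X k ^ (p ^ 4)) * X 1 ^ (p ^ 2) := by
  haveI : Fact p.Prime := ⟨hp⟩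
  have e3 : p * p ^ 2 = p ^ 3 := by ring
  have e4 : p ^ 2 * p ^ 2 = p ^ 4 := by ring
  simp only [phi, aeval_X]
  rw [add_pow_char_pow, add_pow_char_pow, mul_pow, mul_pow]
  simp only [← map_pow, ← pow_mul]
  rw [e3, e4]

set_option maxHeartbeats 1000000 in
theorem st_L20 (p : ℕ) (hp : p.Prime) (hodd : Odd p)
    (Q0 Q1 : MvPolynomial (Fin 2) (ZMod p))
    (hQ0 : Q0 * L2 p = L20 p) (hQ1 : Q1 * L2 p = L21 p)
    (i j : ℕ) :
    St p i j (L20 p) =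
      if (i, j) = (0, 0) then L2 p * Q0
      else if (i, j) = (0, p) then -(L2 p * Q0 ^ (p + 1))
      else if (i, j) = (0, p ^ 2) then
        L2 p * (Q0 * Q1 ^ (p ^ 2 + p) - Q0 ^ (p ^ 2 + 1))
      else if (i, j) = (0, p ^ 2 + p) then L2 p * Q0 ^ (p ^ 2 + p + 1)
      else if (i, j) = (p, p ^ 2) then L2 p * Q0 ^ (p + 1) * Q1 ^ (p ^ 2)
      else if (i, j) = (p ^ 2, 0) then L2 p * Q0 * Q1 ^ p
      else if (i, j) = (p ^ 2 + p, 0) then L2 p * Q0 ^ (p + 1)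
      else 0 := by
  haveI : Fact p.Prime := ⟨hp⟩
  have hp2 : 2 ≤ p := hp.two_le
  -- L2 is nonzero
  have hne : L2 p ≠ 0 := by
    intro h
    have h' := congrArg (coeff (Finsupp.single (0 : Fin 2) 1 + Finsupp.single 1 p)) h
    rw [show L2 p = C (1 : ZMod p) * X 0 ^ 1 * X 1 ^ p - C 1 * X 0 ^ p * X 1 ^ 1 by
      rw [L2, map_one]; ring] at h'
    rw [coeff_sub, coeff_CXX, coeff_CXX, coeff_zero] at h'
    have hc1 : (1 = 1 ∧ p = p) := ⟨rfl, rfl⟩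
    have hc2 : ¬(1 = p ∧ p = 1) := fun hc => by omega
    rw [if_pos hc1, if_neg hc2, sub_zero] at h'
    exact one_ne_zero h'
  -- basic identities
  have c1 : L20 p = L2 p * Q0 := by rw [← hQ0]; ring
  have hL : L2 p ^ p = L2 p * Q0 := by
    rw [show L2 p ^ p = L20 p by
      rw [L2, L20, sub_pow_char]; simp only [mul_pow, ← pow_mul]; ring, c1]
  have key0 : (Q1 * X 0 ^ p - Q0 * X 0) * L2 p
      = (X 0 ^ (p ^ 2) : MvPolynomial (Fin 2) (ZMod p)) * L2 p := by
    have h0 : (Q1 * X 0 ^ p - Q0 * X 0) * L2 p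
        = (Q1 * L2 p) * X 0 ^ p - (Q0 * L2 p) * X 0 := by ring
    rw [h0, hQ1, hQ0, L21, L20, L2]; ring
  have key1 : (Q1 * X 1 ^ p - Q0 * X 1) * L2 p
      = (X 1 ^ (p ^ 2) : MvPolynomial (Fin 2) (ZMod p)) * L2 p := by
    have h0 : (Q1 * X 1 ^ p - Q0 * X 1) * L2 p
        = (Q1 * L2 p) * X 1 ^ p - (Q0 * L2 p) * X 1 := by ring
    rw [h0, hQ1, hQ0, L21, L20, L2]; ring
  have hE0 : Q1 * X 0 ^ p - Q0 * X 0 = (X 0 ^ (p ^ 2) : MvPolynomial (Fin 2) (ZMod p)) :=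
    mul_right_cancel₀ hne key0
  have hE1 : Q1 * X 1 ^ p - Q0 * X 1 = (X 1 ^ (p ^ 2) : MvPolynomial (Fin 2) (ZMod p)) :=
    mul_right_cancel₀ hne key1
  have h30 : (X 0 ^ (p ^ 3) : MvPolynomial (Fin 2) (ZMod p))
      = Q1 ^ p * X 0 ^ (p ^ 2) - Q0 ^ p * X 0 ^ p := by
    have e : (X 0 ^ (p ^ 3) : MvPolynomial (Fin 2) (ZMod p))
        = (Q1 * X 0 ^ p - Q0 * X 0) ^ p := by
      rw [hE0, ← pow_mul, show p ^ 2 * p = p ^ 3 by ring]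
    rw [e, sub_pow_char, mul_pow, mul_pow, ← pow_mul, show p * p = p ^ 2 by ring]
  have h31 : (X 1 ^ (p ^ 3) : MvPolynomial (Fin 2) (ZMod p))
      = Q1 ^ p * X 1 ^ (p ^ 2) - Q0 ^ p * X 1 ^ p := by
    have e : (X 1 ^ (p ^ 3) : MvPolynomial (Fin 2) (ZMod p))
        = (Q1 * X 1 ^ p - Q0 * X 1) ^ p := by
      rw [hE1, ← pow_mul, show p ^ 2 * p = p ^ 3 by ring]
    rw [e, sub_pow_char, mul_pow, mul_pow, ← pow_mul, show p * p = p ^ 2 by ring]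
  have hM03 : (X 0 * X 1 ^ (p ^ 3) - X 0 ^ (p ^ 3) * X 1 : MvPolynomial (Fin 2) (ZMod p))
      = (Q1 ^ (p + 1) - Q0 ^ p) * L2 p := by
    rw [h30, h31, ← hE0, ← hE1, L2]
    ring
  -- the seven coefficients, in expanded form
  have c1' : (X 0 ^ p * X 1 ^ (p ^ 2) - X 0 ^ (p ^ 2) * X 1 ^ p :
        MvPolynomial (Fin 2) (ZMod p)) = L2 p * Q0 := by
    rw [← c1, L20]
  have c2' : (X 0 ^ p * X 1 ^ (p ^ 3) - X 0 ^ (p ^ 3) * X 1 ^ p :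
        MvPolynomial (Fin 2) (ZMod p)) = L2 p * Q0 * Q1 ^ p := by
    rw [show (X 0 ^ p * X 1 ^ (p ^ 3) - X 0 ^ (p ^ 3) * X 1 ^ p :
        MvPolynomial (Fin 2) (ZMod p)) = L21 p ^ p by
      rw [L21, sub_pow_char]; simp only [mul_pow, ← pow_mul]; ring]
    rw [← hQ1, mul_pow, hL]; ring
  have c3' : (X 0 ^ p * X 1 ^ (p ^ 4) - X 0 ^ (p ^ 4) * X 1 ^ p :
        MvPolynomial (Fin 2) (ZMod p))
      = L2 p * (Q0 * Q1 ^ (p ^ 2 + p) - Q0 ^ (p ^ 2 + 1)) := by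
    rw [show (X 0 ^ p * X 1 ^ (p ^ 4) - X 0 ^ (p ^ 4) * X 1 ^ p :
        MvPolynomial (Fin 2) (ZMod p))
        = (X 0 * X 1 ^ (p ^ 3) - X 0 ^ (p ^ 3) * X 1) ^ p by
      rw [sub_pow_char]; simp only [mul_pow, ← pow_mul]; ring]
    rw [hM03, mul_pow, hL, sub_pow_char]
    ring
  have c4' : (X 0 ^ (p ^ 2) * X 1 ^ (p ^ 3) - X 0 ^ (p ^ 3) * X 1 ^ (p ^ 2) :
        MvPolynomial (Fin 2) (ZMod p)) = L2 p * Q0 ^ (p + 1) := by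
    rw [show (X 0 ^ (p ^ 2) * X 1 ^ (p ^ 3) - X 0 ^ (p ^ 3) * X 1 ^ (p ^ 2) :
        MvPolynomial (Fin 2) (ZMod p)) = L20 p ^ p by
      rw [L20, sub_pow_char]; simp only [mul_pow, ← pow_mul]; ring]
    rw [c1, mul_pow, hL]; ring
  have hL2p2 : L2 p ^ (p ^ 2) = L2 p * Q0 ^ (p + 1) := by
    rw [show L2 p ^ (p ^ 2) = (L2 p ^ p) ^ p by rw [← pow_mul]; congr 1; ring]
    rw [hL, mul_pow, hL]; ring
  have c5' : (X 0 ^ (p ^ 2) * X 1 ^ (p ^ 4) - X 0 ^ (p ^ 4) * X 1 ^ (p ^ 2) :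
        MvPolynomial (Fin 2) (ZMod p)) = L2 p * Q0 ^ (p + 1) * Q1 ^ (p ^ 2) := by
    rw [show (X 0 ^ (p ^ 2) * X 1 ^ (p ^ 4) - X 0 ^ (p ^ 4) * X 1 ^ (p ^ 2) :
        MvPolynomial (Fin 2) (ZMod p)) = L21 p ^ (p ^ 2) by
      rw [L21, sub_pow_char_pow]; simp only [mul_pow, ← pow_mul]; ring]
    rw [← hQ1, mul_pow, hL2p2]; ring
  have c7' : (X 0 ^ (p ^ 3) * X 1 ^ (p ^ 4) - X 0 ^ (p ^ 4) * X 1 ^ (p ^ 3) :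
        MvPolynomial (Fin 2) (ZMod p)) = L2 p * Q0 ^ (p ^ 2 + p + 1) := by
    rw [show (X 0 ^ (p ^ 3) * X 1 ^ (p ^ 4) - X 0 ^ (p ^ 4) * X 1 ^ (p ^ 3) :
        MvPolynomial (Fin 2) (ZMod p)) = L20 p ^ (p ^ 2) by
      rw [L20, sub_pow_char_pow]; simp only [mul_pow, ← pow_mul]; ring]
    rw [c1, mul_pow, hL2p2]; ring
  -- the expansion of phi (L20)
  have hphiL : phi p (L20 p)
      = (phi p (X 0)) ^ p * (phi p (X 1)) ^ (p ^ 2)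
        - (phi p (X 0)) ^ (p ^ 2) * (phi p (X 1)) ^ p := by
    rw [L20]
    simp only [map_sub, map_mul, map_pow]
  have hphi : phi p (L20 p) =
      C (L2 p * Q0) * X 0 ^ 0 * X 1 ^ 0
      + C (-(L2 p * Q0 ^ (p + 1))) * X 0 ^ 0 * X 1 ^ p
      + C (L2 p * (Q0 * Q1 ^ (p ^ 2 + p) - Q0 ^ (p ^ 2 + 1))) * X 0 ^ 0 * X 1 ^ (p ^ 2)
      + C (L2 p * Q0 ^ (p ^ 2 + p + 1)) * X 0 ^ 0 * X 1 ^ (p ^ 2 + p)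
      + C (L2 p * Q0 ^ (p + 1) * Q1 ^ (p ^ 2)) * X 0 ^ p * X 1 ^ (p ^ 2)
      + C (L2 p * Q0 * Q1 ^ p) * X 0 ^ (p ^ 2) * X 1 ^ 0
      + C (L2 p * Q0 ^ (p + 1)) * X 0 ^ (p ^ 2 + p) * X 1 ^ 0 := by
    rw [hphiL, phi_X_pow_p p hp 0, phi_X_pow_p p hp 1,
      phi_X_pow_p2 p hp 0, phi_X_pow_p2 p hp 1,
      ← c2', ← c3', ← c5', ← c7', ← c4', ← c1']
    simp only [map_sub, map_mul, map_pow, map_neg]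
    ring
  -- extract coefficients
  simp only [St]
  rw [hphi]
  simp only [coeff_add, coeff_CXX]
  simp only [Prod.mk.injEq]
  have hpq : p < p ^ 2 := by nlinarith
  have hp0 : 0 < p := hp.pos
  generalize p ^ 2 = q at hpq ⊢
  split_ifs <;> first | ring1 | (exfalso; omega)
end

section
/- Let p be an odd prime and let St^{(i,j)} denote the Steenrod–Milnor operations on F_p[y₁,y₂]. Then St^{(i,j)}(L_{2,1}) is given as follows: it equals L₂·Q_{2,1} if (i,j)=(0,0); L₂·(Q_{2,1}^{p²+p+1} − Q_{2,0}^p·Q_{2,1}^{p²} − Q_{2,0}^{p²}·Q_{2,1}) if (i,j)=(0,p²); L₂·Q_{2,0}^{p+1}·Q_{2,1}^{p²} if (i,j)=(0,p²+1); L₂·Q_{2,0} if (i,j)=(1,0); L₂·(Q_{2,0}·Q_{2,1}^{p²+p} − Q_{2,0}^{p²+1}) if (i,j)=(1,p²); L₂·(Q_{2,1}^{p+1} − Q_{2,0}^p) if (i,j)=(p²,0); L₂·Q_{2,0}^{p+1} if (i,j)=(p²,1); L₂·Q_{2,0}·Q_{2,1}^p if (i,j)=(p²+1,0); and 0 for all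 other pairs (i,j) of nonnegative integers. -/
open MvPolynomial Finset

lemma aux_mono {R : Type*} [CommSemiring R] (a : R) (m n : ℕ) :
    (C a * X 0 ^ m * X 1 ^ n : MvPolynomial (Fin 2) R)
      = monomial (Finsupp.single 0 m + Finsupp.single 1 n) a := by
  rw [X_pow_eq_monomial, X_pow_eq_monomial, C_apply, monomial_mul, monomial_mul]
  simp

lemma aux_sing (m n i j : ℕ) :
    (Finsupp.single (0 : Fin 2) m + Finsupp.single (1 : Fin 2) n
      = Finsupp.single (0 : Fin 2) i + Finsupp.single (1 : Fin 2) j) ↔ (m = i ∧ n = j) := by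
  constructor
  · intro h
    constructor
    · have := DFunLike.congr_fun h 0
      simpa [Finsupp.single_apply] using this
    · have := DFunLike.congr_fun h 1
      simpa [Finsupp.single_apply] using this
  · rintro ⟨rfl, rfl⟩; rfl

lemma aux_coeff {R : Type*} [CommSemiring R] (a : R) (m n i j : ℕ) :
    coeff (Finsupp.single (0 : Fin 2) i + Finsupp.single (1 : Fin 2) j)
      (C a * X 0 ^ m * X 1 ^ n : MvPolynomial (Fin 2) R)
      = if (i, j) = (m, n) then a else 0 := by
  rw [aux_mono, coeff_monomial]
  by_cases h : (i, j) = (m, n)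
  · rw [Prod.mk.injEq] at h
    rw [if_pos ((aux_sing m n i j).mpr ⟨h.1.symm, h.2.symm⟩), if_pos (by simp [h.1, h.2])]
  · rw [if_neg h, if_neg]
    intro hc
    obtain ⟨h1, h2⟩ := (aux_sing m n i j).mp hc
    exact h (by simp [h1, h2])

set_option maxHeartbeats 1600000 in
theorem st_L21 (p : ℕ) (hp : p.Prime) (hodd : Odd p)
    (Q0 Q1 : MvPolynomial (Fin 2) (ZMod p))
    (hQ0 : Q0 * L2 p = L20 p) (hQ1 : Q1 * L2 p = L21 p)
    (i j : ℕ) :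
    St p i j (L21 p) =
      if (i, j) = (0, 0) then L2 p * Q1
      else if (i, j) = (0, p ^ 2) then
        L2 p * (Q1 ^ (p ^ 2 + p + 1) - Q0 ^ p * Q1 ^ (p ^ 2) - Q0 ^ (p ^ 2) * Q1)
      else if (i, j) = (0, p ^ 2 + 1) then L2 p * Q0 ^ (p + 1) * Q1 ^ (p ^ 2)
      else if (i, j) = (1, 0) then L2 p * Q0
      else if (i, j) = (1, p ^ 2) then
        L2 p * (Q0 * Q1 ^ (p ^ 2 + p) - Q0 ^ (p ^ 2 + 1))
      else if (i, j) = (p ^ 2, 0) then L2 p * (Q1 ^ (p + 1) - Q0 ^ p)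
      else if (i, j) = (p ^ 2, 1) then L2 p * Q0 ^ (p + 1)
      else if (i, j) = (p ^ 2 + 1, 0) then L2 p * Q0 * Q1 ^ p
      else 0 := by
  haveI : Fact p.Prime := ⟨hp⟩
  have hp2 : 2 ≤ p := hp.two_le
  simp only [L2, L20, L21] at hQ0 hQ1
  have hL2ne : (X 0 * X 1 ^ p - X 0 ^ p * X 1 : MvPolynomial (Fin 2) (ZMod p)) ≠ 0 := by
    intro h
    have h1 : coeff (Finsupp.single (0 : Fin 2) 1 + Finsupp.single (1 : Fin 2) p)
        (X 0 * X 1 ^ p - X 0 ^ p * X 1 : MvPolynomial (Fin 2) (ZMod p)) = 1 := by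
      have e : (X 0 * X 1 ^ p - X 0 ^ p * X 1 : MvPolynomial (Fin 2) (ZMod p))
          = C 1 * X 0 ^ 1 * X 1 ^ p - C 1 * X 0 ^ p * X 1 ^ 1 := by simp
      rw [e, coeff_sub, aux_coeff, aux_coeff, if_pos rfl, if_neg (by simp; omega)]
      simp
    rw [h] at h1
    simp at h1
  -- the fundamental relation `y^{p²} = Q₁ y^p - Q₀ y`
  have hX : ∀ k : Fin 2, (X k : MvPolynomial (Fin 2) (ZMod p)) ^ (p ^ 2)
      = Q1 * X k ^ p - Q0 * X k := by
    have h0 : (X 0 : MvPolynomial (Fin 2) (ZMod p)) ^ (p ^ 2) = Q1 * X 0 ^ p - Q0 * X 0 := by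
      refine mul_right_cancel₀ hL2ne ?_
      linear_combination (X 0 : MvPolynomial (Fin 2) (ZMod p)) * hQ0
        - (X 0 : MvPolynomial (Fin 2) (ZMod p)) ^ p * hQ1
    have h1 : (X 1 : MvPolynomial (Fin 2) (ZMod p)) ^ (p ^ 2) = Q1 * X 1 ^ p - Q0 * X 1 := by
      refine mul_right_cancel₀ hL2ne ?_
      linear_combination (X 1 : MvPolynomial (Fin 2) (ZMod p)) * hQ0
        - (X 1 : MvPolynomial (Fin 2) (ZMod p)) ^ p * hQ1
    intro k
    fin_cases k
    exacts [h0, h1]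
  have hX3 : ∀ k : Fin 2, (X k : MvPolynomial (Fin 2) (ZMod p)) ^ (p ^ 3)
      = (Q1 ^ (p + 1) - Q0 ^ p) * X k ^ p - Q1 ^ p * Q0 * X k := by
    intro k
    rw [show p ^ 3 = p ^ 2 * p from by ring, pow_mul, hX k, sub_pow_char, mul_pow, mul_pow,
      ← pow_mul, show p * p = p ^ 2 from by ring, hX k]
    ring
  have hX4 : ∀ k : Fin 2, (X k : MvPolynomial (Fin 2) (ZMod p)) ^ (p ^ 4)
      = (Q1 ^ (p ^ 2 + p + 1) - Q0 ^ p * Q1 ^ (p ^ 2) - Q0 ^ (p ^ 2) * Q1) * X k ^ p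
        - (Q0 * Q1 ^ (p ^ 2 + p) - Q0 ^ (p ^ 2 + 1)) * X k := by
    intro k
    rw [show p ^ 4 = p ^ 3 * p from by ring, pow_mul, hX3 k, sub_pow_char, mul_pow, mul_pow,
      ← pow_mul, show p * p = p ^ 2 from by ring, hX k, sub_pow_char]
    ring
  -- the eight coefficient identities
  have e1 : (X 0 * X 1 ^ (p ^ 2) - X 0 ^ (p ^ 2) * X 1 : MvPolynomial (Fin 2) (ZMod p))
      = L2 p * Q1 := by
    simp only [L2]; linear_combination -hQ1
  have e2 : (X 0 * X 1 ^ (p ^ 4) - X 0 ^ (p ^ 4) * X 1 : MvPolynomial (Fin 2) (ZMod p))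
      = L2 p * (Q1 ^ (p ^ 2 + p + 1) - Q0 ^ p * Q1 ^ (p ^ 2) - Q0 ^ (p ^ 2) * Q1) := by
    simp only [L2]
    linear_combination (X 0 : MvPolynomial (Fin 2) (ZMod p)) * hX4 1
      - (X 1 : MvPolynomial (Fin 2) (ZMod p)) * hX4 0
  have e3 : (X 0 ^ (p ^ 2) * X 1 ^ (p ^ 4) - X 0 ^ (p ^ 4) * X 1 ^ (p ^ 2) :
      MvPolynomial (Fin 2) (ZMod p)) = L2 p * Q0 ^ (p + 1) * Q1 ^ (p ^ 2) := by
    simp only [L2]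
    linear_combination (X 0 : MvPolynomial (Fin 2) (ZMod p)) ^ (p ^ 2) * hX4 1
      - (X 1 : MvPolynomial (Fin 2) (ZMod p)) ^ (p ^ 2) * hX4 0
      + (Q1 ^ (p ^ 2 + p + 1) - Q0 ^ p * Q1 ^ (p ^ 2) - Q0 ^ (p ^ 2) * Q1) * hQ0
      - (Q0 * Q1 ^ (p ^ 2 + p) - Q0 ^ (p ^ 2 + 1)) * hQ1
  have e4 : (X 0 ^ p * X 1 ^ (p ^ 2) - X 0 ^ (p ^ 2) * X 1 ^ p : MvPolynomial (Fin 2) (ZMod p))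
      = L2 p * Q0 := by
    simp only [L2]; linear_combination -hQ0
  have e5 : (X 0 ^ p * X 1 ^ (p ^ 4) - X 0 ^ (p ^ 4) * X 1 ^ p : MvPolynomial (Fin 2) (ZMod p))
      = L2 p * (Q0 * Q1 ^ (p ^ 2 + p) - Q0 ^ (p ^ 2 + 1)) := by
    simp only [L2]
    linear_combination (X 0 : MvPolynomial (Fin 2) (ZMod p)) ^ p * hX4 1
      - (X 1 : MvPolynomial (Fin 2) (ZMod p)) ^ p * hX4 0
  have e6 : (X 0 * X 1 ^ (p ^ 3) - X 0 ^ (p ^ 3) * X 1 : MvPolynomial (Fin 2) (ZMod p))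
      = L2 p * (Q1 ^ (p + 1) - Q0 ^ p) := by
    simp only [L2]
    linear_combination (X 0 : MvPolynomial (Fin 2) (ZMod p)) * hX3 1
      - (X 1 : MvPolynomial (Fin 2) (ZMod p)) * hX3 0
  have e7 : (X 0 ^ (p ^ 2) * X 1 ^ (p ^ 3) - X 0 ^ (p ^ 3) * X 1 ^ (p ^ 2) :
      MvPolynomial (Fin 2) (ZMod p)) = L2 p * Q0 ^ (p + 1) := by
    simp only [L2]
    linear_combination (X 0 : MvPolynomial (Fin 2) (ZMod p)) ^ (p ^ 2) * hX3 1
      - (X 1 : MvPolynomial (Fin 2) (ZMod p)) ^ (p ^ 2) * hX3 0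
      + (Q1 ^ (p + 1) - Q0 ^ p) * hQ0 - Q1 ^ p * Q0 * hQ1
  have e8 : (X 0 ^ p * X 1 ^ (p ^ 3) - X 0 ^ (p ^ 3) * X 1 ^ p : MvPolynomial (Fin 2) (ZMod p))
      = L2 p * Q0 * Q1 ^ p := by
    simp only [L2]
    linear_combination (X 0 : MvPolynomial (Fin 2) (ZMod p)) ^ p * hX3 1
      - (X 1 : MvPolynomial (Fin 2) (ZMod p)) ^ p * hX3 0
  -- the expansion of `φ(L_{2,1})`
  have hpow : ∀ k : Fin 2,
      ((C (X k) + C (X k) ^ p * X 0 + C (X k) ^ (p ^ 2) * X 1 :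
        MvPolynomial (Fin 2) (MvPolynomial (Fin 2) (ZMod p)))) ^ (p ^ 2)
      = C (X k) ^ (p ^ 2) + C (X k) ^ (p ^ 3) * X 0 ^ (p ^ 2)
        + C (X k) ^ (p ^ 4) * X 1 ^ (p ^ 2) := by
    intro k
    rw [add_pow_char_pow, add_pow_char_pow, mul_pow, mul_pow, ← pow_mul, ← pow_mul,
      show p * p ^ 2 = p ^ 3 from by ring, show p ^ 2 * p ^ 2 = p ^ 4 from by ring]
  have key : phi p (L21 p) =
      C (X 0 * X 1 ^ (p ^ 2) - X 0 ^ (p ^ 2) * X 1) * X 0 ^ 0 * X 1 ^ 0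
    + C (X 0 * X 1 ^ (p ^ 4) - X 0 ^ (p ^ 4) * X 1) * X 0 ^ 0 * X 1 ^ (p ^ 2)
    + C (X 0 ^ (p ^ 2) * X 1 ^ (p ^ 4) - X 0 ^ (p ^ 4) * X 1 ^ (p ^ 2)) * X 0 ^ 0 * X 1 ^ (p ^ 2 + 1)
    + C (X 0 ^ p * X 1 ^ (p ^ 2) - X 0 ^ (p ^ 2) * X 1 ^ p) * X 0 ^ 1 * X 1 ^ 0
    + C (X 0 ^ p * X 1 ^ (p ^ 4) - X 0 ^ (p ^ 4) * X 1 ^ p) * X 0 ^ 1 * X 1 ^ (p ^ 2)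
    + C (X 0 * X 1 ^ (p ^ 3) - X 0 ^ (p ^ 3) * X 1) * X 0 ^ (p ^ 2) * X 1 ^ 0
    + C (X 0 ^ (p ^ 2) * X 1 ^ (p ^ 3) - X 0 ^ (p ^ 3) * X 1 ^ (p ^ 2)) * X 0 ^ (p ^ 2) * X 1 ^ 1
    + C (X 0 ^ p * X 1 ^ (p ^ 3) - X 0 ^ (p ^ 3) * X 1 ^ p) * X 0 ^ (p ^ 2 + 1) * X 1 ^ 0 := by
    simp only [phi, L21, map_sub, map_mul, map_pow, aeval_X]
    rw [hpow 0, hpow 1]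
    ring
  rw [e1, e2, e3, e4, e5, e6, e7, e8] at key
  simp only [St]
  rw [key]
  simp only [coeff_add, aux_coeff]
  have h4 : 4 ≤ p ^ 2 := by nlinarith
  set q := p ^ 2 with hq
  clear_value q
  clear hQ0 hQ1 hX hX3 hX4 e1 e2 e3 e4 e5 e6 e7 e8 key hpow hL2ne hp hodd hq
  split_ifs <;> first
    | (exfalso; simp only [Prod.mk.injEq] at *; omega)
    | simp only [add_zero, zero_add]
end

section
/- Let p be an odd prime and let j be a nonnegative integer. If j = kp+r with integers 0 ≤ k < p and 0 ≤ r < p, then St^{(0,j)}(Q_{2,0}) = Q_{2,0}^{r}·Q_{2,0}·Σ_{i=0}^{k} (−1)^i·C(k,i)·C(r+i,i)·Q_{2,0}^{(k−i)p}·Q_{2,1}^{i(p+1)}; otherwise (i.e. if j ≥ p²) St^{(0,j)}(Q_{2,0}) = 0. (Binomial coefficients are reduced mod p.) -/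
set_option maxHeartbeats 3200000
set_option maxRecDepth 8000

open MvPolynomial Finset

/-- The binomial congruence `C(p-1-i, a) ≡ (-1)^a C(a+i, i) (mod p)`. -/
lemma choose_aux (p : ℕ) (hp : p.Prime) (i a : ℕ) (h : a + i ≤ p - 1) :
    (((p - 1 - i).choose a : ℕ) : ZMod p) = (-1) ^ a * (((a + i).choose i : ℕ) : ZMod p) := by
  haveI : Fact p.Prime := ⟨hp⟩
  induction a with
  | zero => simp
  | succ a ih =>
    have hp2 : 2 ≤ p := hp.two_le
    have h' : a + i ≤ p - 1 := by omega
    have ha1 : a + 1 < p := by omega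
    have hne : ((a + 1 : ℕ) : ZMod p) ≠ 0 := by
      rw [Ne, ZMod.natCast_eq_zero_iff]
      intro hdvd
      have := Nat.le_of_dvd (by omega) hdvd
      omega
    apply mul_right_cancel₀ hne
    have eq1 : (p - 1 - i).choose (a + 1) * (a + 1) = (p - 1 - i).choose a * (p - 1 - i - a) :=
      Nat.choose_succ_right_eq _ _
    have eq2 : (a + i + 1) * ((a + i).choose a) = ((a + i + 1).choose (a + 1)) * (a + 1) :=
      Nat.add_one_mul_choose_eq (a + i) a
    have sym1 : (a + i).choose i = (a + i).choose a := by
      have := Nat.choose_symm (Nat.le_add_right a i)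
      simpa using this
    have sym2 : (a + 1 + i).choose i = (a + i + 1).choose (a + 1) := by
      have := Nat.choose_symm (n := a + i + 1) (k := a + 1) (by omega)
      have h3 : a + i + 1 - (a + 1) = i := by omega
      rw [h3] at this
      rw [show a + 1 + i = a + i + 1 by omega, this]
    have castsub : (((p - 1 - i - a : ℕ)) : ZMod p) = -((1 + i + a : ℕ) : ZMod p) := by
      rw [show (p - 1 - i - a : ℕ) = p - (1 + i + a) by omega,
        Nat.cast_sub (by omega), ZMod.natCast_self, zero_sub]
    have e2 : (((a + i + 1) : ℕ) : ZMod p) * (((a + i).choose a : ℕ) : ZMod p)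
        = (((a + i + 1).choose (a + 1) : ℕ) : ZMod p) * (((a + 1) : ℕ) : ZMod p) := by
      exact_mod_cast congrArg (Nat.cast : ℕ → ZMod p) eq2
    calc (((p - 1 - i).choose (a + 1) : ℕ) : ZMod p) * ((a + 1 : ℕ) : ZMod p)
        = (((p - 1 - i).choose (a + 1) * (a + 1) : ℕ) : ZMod p) := by push_cast; ring
      _ = (((p - 1 - i).choose a * (p - 1 - i - a) : ℕ) : ZMod p) := by rw [eq1]
      _ = (-1) ^ a * (((a + i).choose i : ℕ) : ZMod p) * (-((1 + i + a : ℕ) : ZMod p)) := by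
          rw [Nat.cast_mul, castsub, ih h']
      _ = (-1) ^ (a + 1) * (((a + 1 + i).choose i : ℕ) : ZMod p) * ((a + 1 : ℕ) : ZMod p) := by
          rw [sym1, sym2]
          push_cast at e2 ⊢
          linear_combination ((-1 : ZMod p)) ^ (a + 1) * e2

/-- Reduction of the triple binomial sum to a single sum, using uniqueness of
base-`p` digits. -/
lemma sum_reduce {R : Type*} [CommRing R] (p k r : ℕ) (hp : p.Prime) (hk : k < p) (hr : r < p)
    (f : ℕ → ℕ → ℕ → R) :
    (∑ i ∈ range p, ∑ s ∈ range (p - i), ∑ m ∈ range (p - i),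
        if s + (m + i) * p = k * p + r then f i s m else 0)
      = ∑ i ∈ range (k + 1), (if r < p - i then f i r (k - i) else 0) := by
  have huniq : ∀ s t : ℕ, s < p → s + t * p = k * p + r → s = r ∧ t = k := by
    intro s t hs h
    have h1 : (s + t * p) % p = s := by rw [Nat.add_mul_mod_self_right, Nat.mod_eq_of_lt hs]
    have h2 : (k * p + r) % p = r := by
      rw [Nat.add_comm, Nat.add_mul_mod_self_right, Nat.mod_eq_of_lt hr]
    rw [h] at h1
    have hsr : s = r := h1.symm.trans h2
    subst hsr
    rw [Nat.add_comm (k * p) s] at h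
    have ht : t * p = k * p := Nat.add_left_cancel h
    exact ⟨rfl, Nat.eq_of_mul_eq_mul_right hp.pos ht⟩
  have step1 : ∀ i ∈ range p,
      (∑ s ∈ range (p - i), ∑ m ∈ range (p - i),
        if s + (m + i) * p = k * p + r then f i s m else 0)
      = if i ≤ k ∧ r < p - i then f i r (k - i) else 0 := by
    intro i _
    by_cases hik : i ≤ k
    · have inner : ∀ s ∈ range (p - i),
          (∑ m ∈ range (p - i), if s + (m + i) * p = k * p + r then f i s m else 0)
          = if s = r then f i r (k - i) else 0 := by
        intro s hs
        have hs' : s < p - i := mem_range.mp hs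
        by_cases hsr : s = r
        · rw [hsr, if_pos rfl]
          have e : ∀ m ∈ range (p - i),
              (if r + (m + i) * p = k * p + r then f i r m else 0)
              = if m = k - i then f i r m else 0 := by
            intro m _
            apply if_congr _ rfl rfl
            constructor
            · intro h
              obtain ⟨-, h2⟩ := huniq r (m + i) (by omega) h
              omega
            · intro h
              subst h
              have h3 : k - i + i = k := by omega
              rw [h3]
              exact Nat.add_comm _ _
          rw [Finset.sum_congr rfl e, Finset.sum_ite_eq' (range (p - i)) (k - i) (fun m => f i r m),
            if_pos (mem_range.mpr (by omega))]
        · rw [if_neg hsr]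
          apply Finset.sum_eq_zero
          intro m _
          rw [if_neg]
          intro h
          exact hsr (huniq s (m + i) (by omega) h).1
      rw [Finset.sum_congr rfl inner,
        Finset.sum_ite_eq' (range (p - i)) r (fun _ => f i r (k - i))]
      simp [hik, mem_range]
    · rw [if_neg (by omega)]
      apply Finset.sum_eq_zero
      intro s hs
      apply Finset.sum_eq_zero
      intro m _
      rw [if_neg]
      intro h
      have := (huniq s (m + i) (by have := mem_range.mp hs; omega) h).2
      omega
  rw [Finset.sum_congr rfl step1]
  rw [← Finset.sum_subset (Finset.range_subset_range.mpr (by omega : k + 1 ≤ p))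
    (fun x _ hx => by rw [if_neg]; rintro ⟨h1, -⟩; exact hx (mem_range.mpr (by omega)))]
  apply Finset.sum_congr rfl
  intro i hi
  have : i ≤ k := by have := mem_range.mp hi; omega
  by_cases h2 : r < p - i <;> simp [this, h2]

theorem st_0j_Q20 (p : ℕ) (hp : p.Prime) (hodd : Odd p)
    (Q0 Q1 : MvPolynomial (Fin 2) (ZMod p))
    (hQ0 : Q0 * L2 p = L20 p) (hQ1 : Q1 * L2 p = L21 p)
    (j : ℕ) :
    (∀ k r : ℕ, k < p → r < p → j = k * p + r →
      St p 0 j Q0 = Q0 ^ r * Q0 *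
        ∑ i ∈ Finset.range (k + 1),
          (-1 : MvPolynomial (Fin 2) (ZMod p)) ^ i *
            C ((k.choose i : ZMod p)) * C (((r + i).choose i : ZMod p)) *
            Q0 ^ ((k - i) * p) * Q1 ^ (i * (p + 1))) ∧
    (p ^ 2 ≤ j → St p 0 j Q0 = 0) := by
  haveI : Fact p.Prime := ⟨hp⟩
  have hp1 : 1 ≤ p := hp.one_le
  have hp2 : 2 ≤ p := hp.two_le
  -- L2 ≠ 0
  have hL2 : L2 p ≠ 0 := by
    intro h
    have hc : coeff (Finsupp.single 0 1 + Finsupp.single 1 p) (L2 p) = 1 := by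
      have m1 : (X 0 * X 1 ^ p : MvPolynomial (Fin 2) (ZMod p))
          = monomial (Finsupp.single 0 1 + Finsupp.single 1 p) 1 := by
        rw [show (X 0 : MvPolynomial (Fin 2) (ZMod p)) = X 0 ^ 1 from (pow_one _).symm,
          X_pow_eq_monomial, X_pow_eq_monomial, monomial_mul, mul_one]
      have m2 : (X 0 ^ p * X 1 : MvPolynomial (Fin 2) (ZMod p))
          = monomial (Finsupp.single 0 p + Finsupp.single 1 1) 1 := by
        rw [show (X 1 : MvPolynomial (Fin 2) (ZMod p)) = X 1 ^ 1 from (pow_one _).symm,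
          X_pow_eq_monomial, X_pow_eq_monomial, monomial_mul, mul_one]
      have hne : (Finsupp.single (0 : Fin 2) p + Finsupp.single 1 1)
          ≠ (Finsupp.single (0 : Fin 2) 1 + Finsupp.single 1 p) := by
        intro heq
        have := DFunLike.congr_fun heq (0 : Fin 2)
        simp [Finsupp.single_apply] at this
        omega
      rw [L2, coeff_sub, m1, m2, coeff_monomial, coeff_monomial, if_pos rfl, if_neg hne]
      ring
    rw [h] at hc
    simp at hc
  -- Q0 = L2^(p-1)
  have hL2p : L2 p ^ p = L20 p := by
    rw [L2, L20, sub_pow_char]; ring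
  have hQ0' : Q0 = L2 p ^ (p - 1) := by
    apply mul_right_cancel₀ hL2
    rw [hQ0, ← hL2p, ← pow_succ, Nat.sub_add_cancel hp1]
  -- key Dickson relation
  have hkey : ∀ k : Fin 2, (X k : MvPolynomial (Fin 2) (ZMod p)) ^ p ^ 2
      = Q1 * X k ^ p - Q0 * X k := by
    intro k
    apply mul_right_cancel₀ hL2
    have h2 : (Q1 * X k ^ p - Q0 * X k) * L2 p = L21 p * X k ^ p - L20 p * X k := by
      rw [← hQ1, ← hQ0]; ring
    rw [h2]
    have hk01 : k = 0 ∨ k = 1 := by omega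
    rcases hk01 with rfl | rfl <;> · simp only [L2, L20, L21]; ring
  -- phi on generators
  have e1 : ∀ k : Fin 2, phi p (X k)
      = (1 - C Q0 * X 1) * C (X k) + (X 0 + C Q1 * X 1) * C (X k) ^ p := by
    intro k
    simp only [phi, aeval_X]
    rw [hkey k]
    simp only [map_sub, map_mul, map_pow]
    ring
  have hu : ((1 : MvPolynomial (Fin 2) (MvPolynomial (Fin 2) (ZMod p))) - C Q0 * X 1) ^ p
      = 1 - C (Q0 ^ p) * X 1 ^ p := by
    rw [sub_pow_char, one_pow, mul_pow, map_pow]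
  have hv : ((X 0 : MvPolynomial (Fin 2) (MvPolynomial (Fin 2) (ZMod p))) + C Q1 * X 1) ^ p
      = X 0 ^ p + C (Q1 ^ p) * X 1 ^ p := by
    rw [add_pow_char, mul_pow, map_pow]
  have e2 : ∀ k : Fin 2, phi p (X k) ^ p
      = (1 - C (Q0 ^ p) * X 1 ^ p) * C (X k) ^ p
        + (X 0 ^ p + C (Q1 ^ p) * X 1 ^ p) * (C Q1 * C (X k) ^ p - C Q0 * C (X k)) := by
    intro k
    rw [e1 k, add_pow_char, mul_pow, mul_pow, hu, hv, ← pow_mul,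
      show p * p = p ^ 2 from (pow_two p).symm,
      show (C (X k) : MvPolynomial (Fin 2) (MvPolynomial (Fin 2) (ZMod p))) ^ p ^ 2
        = C (X k ^ p ^ 2) from (map_pow (C : MvPolynomial (Fin 2) (ZMod p) →+*
          MvPolynomial (Fin 2) (MvPolynomial (Fin 2) (ZMod p))) (X k) (p ^ 2)).symm, hkey k]
    simp only [map_sub, map_mul, map_pow]
  have hphiL2 : phi p (L2 p) = C (L2 p) *
      ((1 - C Q0 * X 1) * (1 - C (Q0 ^ p) * X 1 ^ p)
        + C Q1 * (1 - C Q0 * X 1) * (X 0 ^ p + C (Q1 ^ p) * X 1 ^ p)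
        + C Q0 * (X 0 + C Q1 * X 1) * (X 0 ^ p + C (Q1 ^ p) * X 1 ^ p)) := by
    have : phi p (L2 p) = phi p (X 0) * phi p (X 1) ^ p - phi p (X 0) ^ p * phi p (X 1) := by
      rw [L2, map_sub, map_mul, map_mul, map_pow, map_pow]
    rw [this, e2 0, e2 1, e1 0, e1 1, L2]
    simp only [map_sub, map_mul, map_pow]
    ring
  have hphiQ0 : phi p Q0 = C Q0 *
      ((1 - C Q0 * X 1) * (1 - C (Q0 ^ p) * X 1 ^ p)
        + C Q1 * (1 - C Q0 * X 1) * (X 0 ^ p + C (Q1 ^ p) * X 1 ^ p)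
        + C Q0 * (X 0 + C Q1 * X 1) * (X 0 ^ p + C (Q1 ^ p) * X 1 ^ p)) ^ (p - 1) := by
    rw [hQ0', map_pow, hphiL2, mul_pow, ← map_pow, ← hQ0']
  -- split off the X 0 part
  obtain ⟨G, hG⟩ : ∃ G : MvPolynomial (Fin 2) (MvPolynomial (Fin 2) (ZMod p)),
      ((1 - C Q0 * X 1) * (1 - C (Q0 ^ p) * X 1 ^ p)
        + C Q1 * (1 - C Q0 * X 1) * (X 0 ^ p + C (Q1 ^ p) * X 1 ^ p)
        + C Q0 * (X 0 + C Q1 * X 1) * (X 0 ^ p + C (Q1 ^ p) * X 1 ^ p)) ^ (p - 1)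
      = ((1 - C Q0 * X 1) * (1 - C (Q0 ^ p) * X 1 ^ p)
          + C (Q1 ^ (p + 1)) * X 1 ^ p) ^ (p - 1) + X 0 * G := by
    have hdvd : (X 0 : MvPolynomial (Fin 2) (MvPolynomial (Fin 2) (ZMod p))) ∣
        (((1 - C Q0 * X 1) * (1 - C (Q0 ^ p) * X 1 ^ p)
          + C Q1 * (1 - C Q0 * X 1) * (X 0 ^ p + C (Q1 ^ p) * X 1 ^ p)
          + C Q0 * (X 0 + C Q1 * X 1) * (X 0 ^ p + C (Q1 ^ p) * X 1 ^ p))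
        - ((1 - C Q0 * X 1) * (1 - C (Q0 ^ p) * X 1 ^ p) + C (Q1 ^ (p + 1)) * X 1 ^ p)) := by
      refine ⟨C Q1 * (1 - C Q0 * X 1) * X 0 ^ (p - 1)
        + C Q0 * ((X 0 ^ p + C (Q1 ^ p) * X 1 ^ p) + C Q1 * X 1 * X 0 ^ (p - 1)), ?_⟩
      have hx : (X 0 : MvPolynomial (Fin 2) (MvPolynomial (Fin 2) (ZMod p))) * X 0 ^ (p - 1)
          = X 0 ^ p := by
        rw [← pow_succ', Nat.sub_add_cancel hp1]
      simp only [map_pow]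
      linear_combination (C Q1 * (1 - C Q0 * X 1) + C Q0 * C Q1 * X 1 - 2 * C Q1) * hx
    obtain ⟨W, hW⟩ := dvd_trans hdvd (sub_dvd_pow_sub_pow _ _ (p - 1))
    exact ⟨W, by rw [← hW]; ring⟩
  -- binomial expansion of the t₁-free part
  have hbin : ∀ (z : MvPolynomial (Fin 2) (MvPolynomial (Fin 2) (ZMod p))) (N : ℕ),
      ((1 : MvPolynomial (Fin 2) (MvPolynomial (Fin 2) (ZMod p))) + z) ^ N
      = ∑ s ∈ range (N + 1),
          z ^ s * ((N.choose s : ℕ) : MvPolynomial (Fin 2) (MvPolynomial (Fin 2) (ZMod p))) := by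
    intro z N
    rw [add_comm, add_pow]
    exact Finset.sum_congr rfl fun s _ => by rw [one_pow, mul_one]
  have hexp : ((1 - C Q0 * X 1) * (1 - C (Q0 ^ p) * X 1 ^ p)
        + C (Q1 ^ (p + 1)) * X 1 ^ p
        : MvPolynomial (Fin 2) (MvPolynomial (Fin 2) (ZMod p))) ^ (p - 1)
      = ∑ i ∈ range p, ∑ s ∈ range (p - i), ∑ m ∈ range (p - i),
          C (((((p - 1).choose i * (p - 1 - i).choose s * (p - 1 - i).choose m : ℕ))
              : MvPolynomial (Fin 2) (ZMod p))
            * ((-1) ^ (s + m) * Q0 ^ (s + m * p) * Q1 ^ (i * (p + 1))))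
          * X 1 ^ (s + (m + i) * p) := by
    rw [add_comm ((1 - C Q0 * X 1) * (1 - C (Q0 ^ p) * X 1 ^ p)) (C (Q1 ^ (p + 1)) * X 1 ^ p),
      add_pow, show p - 1 + 1 = p from by omega]
    refine Finset.sum_congr rfl fun i hi => ?_
    have hi' : i < p := mem_range.mp hi
    have hNi : p - 1 - i + 1 = p - i := by omega
    have h1 : ((1 : MvPolynomial (Fin 2) (MvPolynomial (Fin 2) (ZMod p))) - C Q0 * X 1) ^ (p - 1 - i)
        = ∑ s ∈ range (p - i), ((-1 : MvPolynomial (Fin 2) (MvPolynomial (Fin 2) (ZMod p))) * (C Q0 * X 1)) ^ s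
            * (((p - 1 - i).choose s : ℕ) : MvPolynomial (Fin 2) (MvPolynomial (Fin 2) (ZMod p))) := by
      rw [show (1 : MvPolynomial (Fin 2) (MvPolynomial (Fin 2) (ZMod p))) - C Q0 * X 1
        = 1 + (-1 : MvPolynomial (Fin 2) (MvPolynomial (Fin 2) (ZMod p))) * (C Q0 * X 1) from by ring,
        hbin, hNi]
    have h2 : ((1 : MvPolynomial (Fin 2) (MvPolynomial (Fin 2) (ZMod p))) - C (Q0 ^ p) * X 1 ^ p) ^ (p - 1 - i)
        = ∑ m ∈ range (p - i), ((-1 : MvPolynomial (Fin 2) (MvPolynomial (Fin 2) (ZMod p))) * (C (Q0 ^ p) * X 1 ^ p)) ^ m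
            * (((p - 1 - i).choose m : ℕ) : MvPolynomial (Fin 2) (MvPolynomial (Fin 2) (ZMod p))) := by
      rw [show (1 : MvPolynomial (Fin 2) (MvPolynomial (Fin 2) (ZMod p))) - C (Q0 ^ p) * X 1 ^ p
        = 1 + (-1 : MvPolynomial (Fin 2) (MvPolynomial (Fin 2) (ZMod p))) * (C (Q0 ^ p) * X 1 ^ p) from by ring,
        hbin, hNi]
    rw [show ((1 - C Q0 * X 1) * (1 - C (Q0 ^ p) * X 1 ^ p)
        : MvPolynomial (Fin 2) (MvPolynomial (Fin 2) (ZMod p))) ^ (p - 1 - i)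
      = (1 - C Q0 * X 1) ^ (p - 1 - i) * (1 - C (Q0 ^ p) * X 1 ^ p) ^ (p - 1 - i)
      from mul_pow _ _ _, h1, h2, Finset.sum_mul_sum, Finset.mul_sum, Finset.sum_mul]
    refine Finset.sum_congr rfl fun s hs => ?_
    rw [Finset.mul_sum, Finset.sum_mul]
    refine Finset.sum_congr rfl fun m hm => ?_
    simp only [map_mul, map_pow, map_natCast, map_neg, map_one, Nat.cast_mul, mul_pow]
    ring
  -- the single-condition coefficient computation
  have hsing : ∀ e : ℕ, (Finsupp.single (1 : Fin 2) e = Finsupp.single (1 : Fin 2) j) ↔ e = j := by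
    intro e
    rw [Finsupp.single_eq_single_iff]
    constructor
    · rintro (⟨-, h⟩ | ⟨h1, h2⟩) <;> omega
    · intro h; exact Or.inl ⟨rfl, h⟩
  have h0supp : (0 : Fin 2) ∉ (Finsupp.single (1 : Fin 2) j).support := by
    simp [Finsupp.single_apply, Finsupp.mem_support_iff]
  have hSt : St p 0 j Q0 = Q0 *
      ∑ i ∈ range p, ∑ s ∈ range (p - i), ∑ m ∈ range (p - i),
        (if s + (m + i) * p = j then
          (((((p - 1).choose i * (p - 1 - i).choose s * (p - 1 - i).choose m : ℕ))
              : MvPolynomial (Fin 2) (ZMod p))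
            * ((-1) ^ (s + m) * Q0 ^ (s + m * p) * Q1 ^ (i * (p + 1)))) else 0) := by
    rw [St, Finsupp.single_zero, zero_add, hphiQ0, hG, mul_add, coeff_add, coeff_C_mul,
      coeff_C_mul, coeff_X_mul', if_neg h0supp, mul_zero, add_zero, hexp]
    simp only [coeff_sum, coeff_C_mul, coeff_X_pow, hsing, mul_ite, mul_one, mul_zero]
  constructor
  · -- the main formula
    intro k r hk hr hj
    subst hj
    rw [hSt, sum_reduce p k r hp hk hr]
    have hterm : ∀ i, i ∈ range (k + 1) →
        (if r < p - i then
          (((((p - 1).choose i * (p - 1 - i).choose r * (p - 1 - i).choose (k - i) : ℕ))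
              : MvPolynomial (Fin 2) (ZMod p))
            * ((-1) ^ (r + (k - i)) * Q0 ^ (r + (k - i) * p) * Q1 ^ (i * (p + 1)))) else 0)
        = Q0 ^ r * ((-1 : MvPolynomial (Fin 2) (ZMod p)) ^ i *
            C ((k.choose i : ZMod p)) * C (((r + i).choose i : ZMod p)) *
            Q0 ^ ((k - i) * p) * Q1 ^ (i * (p + 1))) := by
      intro i hi
      have hik : i ≤ k := by have := mem_range.mp hi; omega
      by_cases hcase : r < p - i
      · rw [if_pos hcase]
        obtain ⟨e, rfl⟩ : ∃ e, k = i + e := ⟨k - i, by omega⟩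
        have he : i + e - i = e := by omega
        rw [he]
        have c1 : (((p - 1).choose i : ℕ) : ZMod p) = (-1) ^ i := by
          simpa using choose_aux p hp 0 i (by omega)
        have c2 : (((p - 1 - i).choose r : ℕ) : ZMod p)
            = (-1) ^ r * (((r + i).choose i : ℕ) : ZMod p) := choose_aux p hp i r (by omega)
        have c3 : (((p - 1 - i).choose e : ℕ) : ZMod p)
            = (-1) ^ e * (((e + i).choose i : ℕ) : ZMod p) := choose_aux p hp i e (by omega)
        have c1' : (((p - 1).choose i : ℕ) : MvPolynomial (Fin 2) (ZMod p)) = (-1) ^ i := by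
          rw [show (((p - 1).choose i : ℕ) : MvPolynomial (Fin 2) (ZMod p))
              = C ((((p - 1).choose i : ℕ)) : ZMod p) from (map_natCast _ _).symm, c1]
          simp
        have c2' : (((p - 1 - i).choose r : ℕ) : MvPolynomial (Fin 2) (ZMod p))
            = (-1) ^ r * C (((r + i).choose i : ZMod p)) := by
          rw [show (((p - 1 - i).choose r : ℕ) : MvPolynomial (Fin 2) (ZMod p))
              = C ((((p - 1 - i).choose r : ℕ)) : ZMod p) from (map_natCast _ _).symm, c2]
          simp
        have c3' : (((p - 1 - i).choose e : ℕ) : MvPolynomial (Fin 2) (ZMod p))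
            = (-1) ^ e * C ((((i + e).choose i : ℕ)) : ZMod p) := by
          rw [show (((p - 1 - i).choose e : ℕ) : MvPolynomial (Fin 2) (ZMod p))
              = C ((((p - 1 - i).choose e : ℕ)) : ZMod p) from (map_natCast _ _).symm, c3,
            show e + i = i + e from Nat.add_comm e i]
          simp
        rw [Nat.cast_mul, Nat.cast_mul, c1', c2', c3', pow_add]
        have hs1 : ((-1 : MvPolynomial (Fin 2) (ZMod p))) ^ r * (-1) ^ r = 1 := by
          rw [← mul_pow]; norm_num
        have hs2 : ((-1 : MvPolynomial (Fin 2) (ZMod p))) ^ e * (-1) ^ e = 1 := by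
          rw [← mul_pow]; norm_num
        linear_combination (((-1 : MvPolynomial (Fin 2) (ZMod p)) ^ i *
            C (((r + i).choose i : ZMod p)) * C ((((i + e).choose i : ℕ)) : ZMod p) *
            Q0 ^ (r + e * p) * Q1 ^ (i * (p + 1))) * ((-1) ^ e * (-1) ^ e)) * hs1 +
          ((-1 : MvPolynomial (Fin 2) (ZMod p)) ^ i *
            C (((r + i).choose i : ZMod p)) * C ((((i + e).choose i : ℕ)) : ZMod p) *
            Q0 ^ (r + e * p) * Q1 ^ (i * (p + 1))) * hs2
      · rw [if_neg hcase]
        have hik' : i < p := by omega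
        have hdvd : (p : ℕ) ∣ (r + i).choose i :=
          hp.dvd_choose hik' (by omega) (by omega)
        have hz : (((r + i).choose i : ℕ) : ZMod p) = 0 :=
          (ZMod.natCast_eq_zero_iff _ _).mpr hdvd
        rw [show ((((r + i).choose i : ℕ)) : ZMod p) = ((((r + i).choose i)) : ZMod p) from rfl, hz,
          map_zero]
        ring
    rw [Finset.sum_congr rfl hterm, ← Finset.mul_sum]
    ring
  · -- vanishing for j ≥ p²
    intro hj
    rw [hSt]
    have hz : (∑ i ∈ range p, ∑ s ∈ range (p - i), ∑ m ∈ range (p - i),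
        (if s + (m + i) * p = j then
          (((((p - 1).choose i * (p - 1 - i).choose s * (p - 1 - i).choose m : ℕ))
              : MvPolynomial (Fin 2) (ZMod p))
            * ((-1) ^ (s + m) * Q0 ^ (s + m * p) * Q1 ^ (i * (p + 1)))) else 0))
        = 0 := by
      apply Finset.sum_eq_zero
      intro i hi
      apply Finset.sum_eq_zero
      intro s hs
      apply Finset.sum_eq_zero
      intro m hm
      have hi' := mem_range.mp hi
      have hs' := mem_range.mp hs
      have hm' := mem_range.mp hm
      have hlt : ¬(s + (m + i) * p = j) := by
        intro hcond
        have h1 : m + i ≤ p - 1 := by omega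
        have h2 : (m + i) * p ≤ (p - 1) * p := Nat.mul_le_mul_right p h1
        have h3 : (p - 1) * p + p = p * p := by
          have h4 : p - 1 + 1 = p := by omega
          calc (p - 1) * p + p = ((p - 1) + 1) * p := by rw [Nat.succ_mul]
            _ = p * p := by rw [h4]
        have h5 : p ^ 2 = p * p := pow_two p
        have hs2 : s < p := by omega
        linarith
      rw [if_neg hlt]
    rw [hz, mul_zero]
end

section
/- Let p be an odd prime and let i, k, r be integers with 0 ≤ k < i < p and 0 ≤ r < p. Then St^{(i,kp+r)}(Q_{2,0}) = 0. -/
open MvPolynomial Finset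

lemma CXX {R : Type*} [CommSemiring R] (c : R) (a b : ℕ) :
    C c * (X (0 : Fin 2) ^ a * X 1 ^ b) =
      monomial (Finsupp.single 0 a + Finsupp.single 1 b) c := by
  rw [X_pow_eq_monomial, X_pow_eq_monomial, monomial_mul, C_apply, monomial_mul]
  simp

lemma phi_L2 (p : ℕ) [Fact p.Prime] :
    phi p (L2 p) =
      C (L2 p) * (X 0 ^ 0 * X 1 ^ 0)
      + C (L21 p) * (X 0 ^ p * X 1 ^ 0)
      + C (X 0 * X 1 ^ (p^3) - X 0 ^ (p^3) * X 1) * (X 0 ^ 0 * X 1 ^ p)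
      + C (L20 p) * (X 0 ^ (p+1) * X 1 ^ 0)
      + C (X 0 ^ p * X 1 ^ (p^3) - X 0 ^ (p^3) * X 1 ^ p) * (X 0 ^ 1 * X 1 ^ p)
      + C (- L20 p) * (X 0 ^ 0 * X 1 ^ 1)
      + C (X 0 ^ (p^2) * X 1 ^ (p^3) - X 0 ^ (p^3) * X 1 ^ (p^2)) * (X 0 ^ 0 * X 1 ^ (p+1)) := by
  rw [L2]
  simp only [phi, map_sub, map_mul, map_pow, aeval_X]
  simp only [add_pow_char, mul_pow, map_pow]
  simp only [L2, L20, L21, map_sub, map_mul, map_pow, map_neg]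
  ring

/-- The allowed `(t₁,t₂)`-exponents in `φ(L₂)`. -/
def GoodExp (p : ℕ) (d : Fin 2 →₀ ℕ) : Prop :=
  (d 0 = 0 ∧ (d 1 = 0 ∨ d 1 = 1 ∨ d 1 = p ∨ d 1 = p + 1)) ∨
  (d 0 = 1 ∧ d 1 = p) ∨ ((d 0 = p ∨ d 0 = p + 1) ∧ d 1 = 0)

lemma single_add_apply (a b : ℕ) :
    ((Finsupp.single (0 : Fin 2) a + Finsupp.single 1 b) : Fin 2 →₀ ℕ) 0 = a ∧
    ((Finsupp.single (0 : Fin 2) a + Finsupp.single 1 b) : Fin 2 →₀ ℕ) 1 = b := by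
  simp [Finsupp.single_apply]

lemma good_support (p : ℕ) [Fact p.Prime] (d : Fin 2 →₀ ℕ)
    (hd : d ∈ (phi p (L2 p)).support) : GoodExp p d := by
  by_contra h
  rw [mem_support_iff] at hd
  apply hd
  rw [phi_L2]
  simp only [CXX]
  have key : ∀ a b : ℕ, ¬ GoodExp p d →
      ((d 0 = a ∧ d 1 = b → GoodExp p d) →
        ¬ ((Finsupp.single (0:Fin 2) a + Finsupp.single 1 b) = d)) := by
    intro a b hng himp he
    exact hng (himp (by rw [← he]; exact single_add_apply a b))
  simp only [coeff_add, coeff_monomial]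
  rw [if_neg (key _ _ h (fun hab => by unfold GoodExp; omega)),
      if_neg (key _ _ h (fun hab => by unfold GoodExp; omega)),
      if_neg (key _ _ h (fun hab => by unfold GoodExp; omega)),
      if_neg (key _ _ h (fun hab => by unfold GoodExp; omega)),
      if_neg (key _ _ h (fun hab => by unfold GoodExp; omega)),
      if_neg (key _ _ h (fun hab => by unfold GoodExp; omega)),
      if_neg (key _ _ h (fun hab => by unfold GoodExp; omega))]
  simp

lemma exists_rep {σ R : Type*} [CommSemiring R] [DecidableEq σ] (f : MvPolynomial σ R) :
    ∀ (n : ℕ) (d : σ →₀ ℕ), d ∈ (f ^ n).support →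
      ∃ g : Fin n → (σ →₀ ℕ), (∀ j, g j ∈ f.support) ∧ d = ∑ j, g j := by
  intro n
  induction n with
  | zero =>
    intro d hd
    refine ⟨fun j => 0, fun j => j.elim0, ?_⟩
    rw [pow_zero, mem_support_iff, coeff_one] at hd
    simp only [Finset.univ_eq_empty, Finset.sum_empty]
    by_contra hne
    rw [if_neg (fun h => hne h.symm)] at hd
    exact hd rfl
  | succ n ih =>
    intro d hd
    rw [pow_succ] at hd
    obtain ⟨d1, hd1, d2, hd2, hsum⟩ := Finset.mem_add.mp (support_mul _ _ hd)
    obtain ⟨g, hg, hrep⟩ := ih d1 hd1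
    refine ⟨Fin.snoc g d2, fun j => ?_, ?_⟩
    · induction j using Fin.lastCases with
      | last => simpa using hd2
      | cast i => simpa using hg i
    · rw [Fin.sum_univ_castSucc]
      simp only [Fin.snoc_castSucc, Fin.snoc_last]
      rw [← hrep, hsum]

lemma counting {n p i k r : ℕ} (hp : 1 < p) (hki : k < i) (hip : i < p) (hrp : r < p)
    (hn : n ≤ p - 1) (x y : Fin n → ℕ)
    (hxy : ∀ j, (x j = 0 ∧ (y j = 0 ∨ y j = 1 ∨ y j = p ∨ y j = p + 1)) ∨
      (x j = 1 ∧ y j = p) ∨ ((x j = p ∨ x j = p + 1) ∧ y j = 0))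
    (hx : ∑ j, x j = i) (hy : ∑ j, y j = k * p + r) : False := by
  have hxle : ∀ j, x j ≤ 1 := by
    intro j
    have h1 : x j ≤ i := hx ▸ Finset.single_le_sum (f := x)
      (fun _ _ => Nat.zero_le _) (Finset.mem_univ j)
    rcases hxy j with ⟨h, _⟩ | ⟨h, _⟩ | ⟨h, _⟩ <;> omega
  -- decompose y j = p * a j + b j
  have key : ∀ j, y j = p * (y j / p) + y j % p ∧ y j % p ≤ 1 ∧ x j ≤ y j / p ∧ y j / p ≤ 1 := by
    intro j
    have := hxle j
    have hmd := Nat.div_add_mod (y j) p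
    rcases hxy j with ⟨h0, h | h | h | h⟩ | ⟨h0, h⟩ | ⟨h0, h⟩ <;>
      [ (have : y j / p = 0 := by rw [h]; simp;
         have h2 : y j % p = 0 := by rw [h]; simp);
        (have : y j / p = 0 := Nat.div_eq_of_lt (by omega);
         have h2 : y j % p = 1 := by rw [h, Nat.mod_eq_of_lt hp]);
        (have : y j / p = 1 := by rw [h, Nat.div_self (by omega)];
         have h2 : y j % p = 0 := by rw [h, Nat.mod_self]);
        (have : y j / p = 1 := by
           rw [h, add_comm, Nat.add_div_right _ (by omega), Nat.div_eq_of_lt hp];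
         have h2 : y j % p = 1 := by
           rw [h, add_comm, Nat.add_mod_right, Nat.mod_eq_of_lt hp]);
        (have : y j / p = 1 := by rw [h, Nat.div_self (by omega)];
         have h2 : y j % p = 0 := by rw [h, Nat.mod_self]);
        (have : y j / p = 0 := by rw [h]; simp;
         have h2 : y j % p = 0 := by rw [h]; simp)] <;>
      omega
  have hsumy : k * p + r = p * (∑ j, y j / p) + ∑ j, y j % p := by
    rw [← hy, Finset.mul_sum, ← Finset.sum_add_distrib]
    exact Finset.sum_congr rfl (fun j _ => (key j).1)
  have hB : ∑ j, y j % p ≤ n := by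
    calc ∑ j, y j % p ≤ ∑ _j : Fin n, 1 :=
          Finset.sum_le_sum (fun j _ => (key j).2.1)
      _ = n := by simp
  have hA : i ≤ ∑ j, y j / p := by
    rw [← hx]; exact Finset.sum_le_sum (fun j _ => (key j).2.2.1)
  -- conclude
  have hBp : ∑ j, y j % p < p := by omega
  have h1 : (p * (∑ j, y j / p) + ∑ j, y j % p) / p = ∑ j, y j / p := by
    rw [Nat.mul_add_div (by omega), Nat.div_eq_of_lt hBp, add_zero]
  have h2 : (k * p + r) / p = k := by
    rw [mul_comm, Nat.mul_add_div (by omega), Nat.div_eq_of_lt hrp, add_zero]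
  rw [hsumy, h1] at h2
  omega

theorem st_vanish_Q20 (p : ℕ) (hp : p.Prime) (hodd : Odd p)
    (Q0 Q1 : MvPolynomial (Fin 2) (ZMod p))
    (hQ0 : Q0 * L2 p = L20 p) (hQ1 : Q1 * L2 p = L21 p)
    (i k r : ℕ) (hki : k < i) (hip : i < p) (hrp : r < p) :
    St p i (k * p + r) Q0 = 0 := by
  haveI : Fact p.Prime := ⟨hp⟩
  have hp1 : 1 < p := hp.one_lt
  have hL2m : L2 p = monomial (Finsupp.single 0 1 + Finsupp.single 1 p) (1 : ZMod p)
      - monomial (Finsupp.single 0 p + Finsupp.single 1 1) 1 := by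
    rw [L2, ← CXX (1 : ZMod p) 1 p, ← CXX (1 : ZMod p) p 1]
    simp
  have hL2ne : L2 p ≠ 0 := by
    intro h
    have hc := congrArg (coeff (Finsupp.single (0 : Fin 2) 1 + Finsupp.single 1 p)) h
    rw [hL2m, coeff_sub, coeff_monomial, coeff_monomial, if_pos rfl, if_neg, coeff_zero] at hc
    · simp at hc
    · intro he
      have := DFunLike.congr_fun he 0
      simp [Finsupp.single_apply] at this
      omega
  have hfrob : L2 p ^ p = L20 p := by
    rw [L2, L20, sub_pow_char]
    ring
  have hQ : Q0 = L2 p ^ (p - 1) := by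
    apply mul_right_cancel₀ hL2ne
    rw [hQ0, ← hfrob, ← pow_succ, Nat.sub_add_cancel hp.one_le]
  rw [hQ, St, map_pow]
  by_contra hne
  obtain ⟨g, hg, hrep⟩ := exists_rep (phi p (L2 p)) (p - 1) _ (mem_support_iff.mpr hne)
  refine counting hp1 hki hip hrp (le_refl (p - 1)) (fun j => g j 0) (fun j => g j 1)
    (fun j => good_support p _ (hg j)) ?_ ?_
  · have h0 : (∑ j, g j) 0 = i := by rw [← hrep]; exact (single_add_apply _ _).1
    rw [Finsupp.finset_sum_apply] at h0; exact h0
  · have h1 : (∑ j, g j) 1 = k * p + r := by rw [← hrep]; exact (single_add_apply _ _).2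
    rw [Finsupp.finset_sum_apply] at h1; exact h1
end

section
/- Let p be an odd prime and let i, k, r be integers with 0 ≤ k, k+1 < i < p and 0 ≤ r < p. Then St^{(i,kp+r)}(Q_{2,1}) = 0. -/
set_option maxHeartbeats 1000000

open MvPolynomial Finset

namespace StVanishAux

lemma mono {R : Type*} [CommSemiring R] (a b : ℕ) (c : R) :
    (monomial (Finsupp.single (0 : Fin 2) a + Finsupp.single 1 b) c : MvPolynomial (Fin 2) R)
      = C c * X 0 ^ a * X 1 ^ b := by
  rw [X_pow_eq_monomial, X_pow_eq_monomial, C_apply, monomial_mul, monomial_mul]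
  simp

lemma pair_eq_iff (a b i m : ℕ) :
    Finsupp.single (0 : Fin 2) a + Finsupp.single 1 b =
      Finsupp.single 0 i + Finsupp.single 1 m ↔ a = i ∧ b = m := by
  constructor
  · intro h
    refine ⟨?_, ?_⟩
    · have := congrArg (fun f => f 0) h
      simpa [Finsupp.single_apply] using this
    · have := congrArg (fun f => f 1) h
      simpa [Finsupp.single_apply] using this
  · rintro ⟨rfl, rfl⟩; rfl

lemma pair_le_iff (a b i m : ℕ) :
    Finsupp.single (0 : Fin 2) a + Finsupp.single 1 b ≤
      Finsupp.single 0 i + Finsupp.single 1 m ↔ a ≤ i ∧ b ≤ m := by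
  rw [Finsupp.le_def]
  constructor
  · intro h
    exact ⟨by simpa [Finsupp.single_apply] using h 0, by simpa [Finsupp.single_apply] using h 1⟩
  · rintro ⟨h1, h2⟩ x
    fin_cases x <;> simp [Finsupp.single_apply, h1, h2]

lemma pair_sub (a b i m : ℕ) :
    (Finsupp.single (0 : Fin 2) i + Finsupp.single 1 m) -
      (Finsupp.single 0 a + Finsupp.single 1 b) =
      Finsupp.single 0 (i - a) + Finsupp.single 1 (m - b) := by
  ext x; fin_cases x <;> simp [Finsupp.tsub_apply, Finsupp.single_apply]

lemma phi0 (p : ℕ) (k : Fin 2) :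
    phi p (X k) = C (X k) + C (X k ^ p) * X 0 + C (X k ^ (p ^ 2)) * X 1 := by
  simp [phi]

lemma powp (p : ℕ) [Fact p.Prime] (k : Fin 2) :
    (phi p (X k)) ^ p
    = C (X k ^ p) + C (X k ^ (p ^ 2)) * X 0 ^ p + C (X k ^ (p ^ 3)) * X 1 ^ p := by
  rw [phi0, add_pow_char, add_pow_char, mul_pow, mul_pow, ← C_pow, ← C_pow, ← C_pow,
    ← pow_mul, ← pow_mul]
  ring_nf

lemma powp2 (p : ℕ) [Fact p.Prime] (k : Fin 2) :
    (phi p (X k)) ^ (p ^ 2)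
    = C (X k ^ (p ^ 2)) + C (X k ^ (p ^ 3)) * X 0 ^ (p ^ 2) + C (X k ^ (p ^ 4)) * X 1 ^ (p ^ 2) := by
  rw [pow_two, pow_mul, powp, add_pow_char, add_pow_char, mul_pow, mul_pow,
    ← C_pow, ← C_pow, ← C_pow, ← pow_mul, ← pow_mul, ← pow_mul]
  ring_nf

lemma phi_L2 (p : ℕ) [Fact p.Prime] :
    phi p (L2 p) =
      C (L2 p) * X 0 ^ 0 * X 1 ^ 0
      + C (X 0 * X 1 ^ (p ^ 2) - X 0 ^ (p ^ 2) * X 1) * X 0 ^ p * X 1 ^ 0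
      + C (X 0 ^ (p ^ 2) * X 1 ^ p - X 0 ^ p * X 1 ^ (p ^ 2)) * X 0 ^ 0 * X 1 ^ 1
      + C (X 0 ^ p * X 1 ^ (p ^ 2) - X 0 ^ (p ^ 2) * X 1 ^ p) * X 0 ^ (p + 1) * X 1 ^ 0
      + C (X 0 * X 1 ^ (p ^ 3) - X 0 ^ (p ^ 3) * X 1) * X 0 ^ 0 * X 1 ^ p
      + C (X 0 ^ p * X 1 ^ (p ^ 3) - X 0 ^ (p ^ 3) * X 1 ^ p) * X 0 ^ 1 * X 1 ^ p
      + C (X 0 ^ (p ^ 2) * X 1 ^ (p ^ 3) - X 0 ^ (p ^ 3) * X 1 ^ (p ^ 2)) * X 0 ^ 0 * X 1 ^ (p + 1) := by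
  have h : phi p (L2 p) = phi p (X 0) * (phi p (X 1)) ^ p - (phi p (X 0)) ^ p * phi p (X 1) := by
    simp only [L2, map_sub, map_mul, map_pow]
  rw [h, powp, powp, phi0, phi0]
  simp only [L2, map_sub, map_mul, map_pow]
  ring

lemma phi_L21 (p : ℕ) [Fact p.Prime] :
    phi p (L21 p) =
      C (L21 p) * X 0 ^ 0 * X 1 ^ 0
      + C (X 0 ^ p * X 1 ^ (p ^ 2) - X 0 ^ (p ^ 2) * X 1 ^ p) * X 0 ^ 1 * X 1 ^ 0
      + C (X 0 * X 1 ^ (p ^ 3) - X 0 ^ (p ^ 3) * X 1) * X 0 ^ (p ^ 2) * X 1 ^ 0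
      + C (X 0 ^ p * X 1 ^ (p ^ 3) - X 0 ^ (p ^ 3) * X 1 ^ p) * X 0 ^ (p ^ 2 + 1) * X 1 ^ 0
      + C (X 0 ^ (p ^ 2) * X 1 ^ (p ^ 3) - X 0 ^ (p ^ 3) * X 1 ^ (p ^ 2)) * X 0 ^ (p ^ 2) * X 1 ^ 1
      + C (X 0 * X 1 ^ (p ^ 4) - X 0 ^ (p ^ 4) * X 1) * X 0 ^ 0 * X 1 ^ (p ^ 2)
      + C (X 0 ^ p * X 1 ^ (p ^ 4) - X 0 ^ (p ^ 4) * X 1 ^ p) * X 0 ^ 1 * X 1 ^ (p ^ 2)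
      + C (X 0 ^ (p ^ 2) * X 1 ^ (p ^ 4) - X 0 ^ (p ^ 4) * X 1 ^ (p ^ 2)) * X 0 ^ 0 * X 1 ^ (p ^ 2 + 1) := by
  have h : phi p (L21 p) = phi p (X 0) * (phi p (X 1)) ^ (p ^ 2)
      - (phi p (X 0)) ^ (p ^ 2) * phi p (X 1) := by
    simp only [L21, map_sub, map_mul, map_pow]
  rw [h, powp2, powp2, phi0, phi0]
  simp only [L21, map_sub, map_mul, map_pow]
  ring

lemma coeff_L21_zero (p : ℕ) [Fact p.Prime] (i m : ℕ) (h2 : 2 ≤ i) (hip : i < p) :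
    coeff (Finsupp.single (0 : Fin 2) i + Finsupp.single 1 m) (phi p (L21 p)) = 0 := by
  obtain ⟨q, hq, hpq⟩ : ∃ q, p ^ 2 = q ∧ p ≤ q := ⟨p ^ 2, rfl, Nat.le_self_pow two_ne_zero p⟩
  rw [phi_L21]
  simp only [← mono, coeff_add, coeff_monomial, pair_eq_iff, hq]
  split_ifs <;> first | (exfalso; omega) | simp

lemma key_eq (p : ℕ) [Fact p.Prime] (Q1 : MvPolynomial (Fin 2) (ZMod p))
    (hQ1 : Q1 * L2 p = L21 p) (i m : ℕ) (h2 : 2 ≤ i) (hip : i < p) :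
    St p i m Q1 * L2 p
      + (if 1 ≤ m then St p i (m - 1) Q1 *
          (X 0 ^ (p ^ 2) * X 1 ^ p - X 0 ^ p * X 1 ^ (p ^ 2)) else 0)
      + (if p ≤ m then St p i (m - p) Q1 *
          (X 0 * X 1 ^ (p ^ 3) - X 0 ^ (p ^ 3) * X 1) else 0)
      + (if p ≤ m then St p (i - 1) (m - p) Q1 *
          (X 0 ^ p * X 1 ^ (p ^ 3) - X 0 ^ (p ^ 3) * X 1 ^ p) else 0)
      + (if p + 1 ≤ m then St p i (m - (p + 1)) Q1 *
          (X 0 ^ (p ^ 2) * X 1 ^ (p ^ 3) - X 0 ^ (p ^ 3) * X 1 ^ (p ^ 2)) else 0) = 0 := by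
  have H : phi p Q1 * phi p (L2 p) = phi p (L21 p) := by rw [← map_mul, hQ1]
  have H2 := congrArg (coeff (Finsupp.single (0 : Fin 2) i + Finsupp.single 1 m)) H
  rw [phi_L2] at H2
  have hni : ¬ p ≤ i := by omega
  have hni1 : ¬ p + 1 ≤ i := by omega
  have h1i : 1 ≤ i := by omega
  simp only [← mono, mul_add, coeff_add, coeff_mul_monomial', pair_le_iff, pair_sub,
    coeff_L21_zero p i m h2 hip, hni, hni1, h1i, Nat.zero_le, true_and, and_true,
    false_and, and_false, if_false, if_true, Nat.sub_zero, true_iff] at H2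
  simpa only [St, add_zero] using H2

lemma L2_ne_zero (p : ℕ) [Fact p.Prime] : L2 p ≠ 0 := by
  intro h
  have hp2 : (2 : ℕ) ≤ p := (Fact.out : p.Prime).two_le
  have e : L2 p = monomial (Finsupp.single (0 : Fin 2) 1 + Finsupp.single 1 p) (1 : ZMod p)
      - monomial (Finsupp.single (0 : Fin 2) p + Finsupp.single 1 1) 1 := by
    rw [L2, mono, mono]; simp
  have c1 : coeff (Finsupp.single (0 : Fin 2) 1 + Finsupp.single 1 p) (L2 p) = 1 := by
    rw [e, coeff_sub, coeff_monomial, coeff_monomial, if_pos rfl, if_neg, sub_zero]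
    rw [pair_eq_iff]
    omega
  rw [h, coeff_zero] at c1
  exact one_ne_zero c1.symm

lemma vanish (p : ℕ) [Fact p.Prime] (Q1 : MvPolynomial (Fin 2) (ZMod p))
    (hQ1 : Q1 * L2 p = L21 p) :
    ∀ m i, 2 ≤ i → i < p → m < (i - 1) * p → St p i m Q1 = 0 := by
  intro m
  induction m using Nat.strong_induction_on with
  | _ m IH =>
    intro i h2 hip hm
    have hp2 : (2 : ℕ) ≤ p := (Fact.out : p.Prime).two_le
    have H := key_eq p Q1 hQ1 i m h2 hip
    by_cases h1m : 1 ≤ m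
    · have o1 : St p i (m - 1) Q1 = 0 :=
        IH (m - 1) (by omega) i h2 hip (lt_of_le_of_lt (Nat.sub_le m 1) hm)
      rw [if_pos h1m, o1, zero_mul] at H
      by_cases hpm : p ≤ m
      · have hi1 : 2 ≤ i - 1 := by
          by_contra hc
          have h1 : i - 1 ≤ 1 := by omega
          have h2' : (i - 1) * p ≤ 1 * p := Nat.mul_le_mul_right p h1
          rw [one_mul] at h2'
          omega
        have emul : (i - 1 - 1) * p = (i - 1) * p - p := by
          rw [Nat.sub_mul, one_mul]
        have o2 : St p i (m - p) Q1 = 0 :=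
          IH (m - p) (by omega) i h2 hip (lt_of_le_of_lt (Nat.sub_le m p) hm)
        have o3 : St p (i - 1) (m - p) Q1 = 0 :=
          IH (m - p) (by omega) (i - 1) hi1 (by omega) (by omega)
        rw [if_pos hpm, if_pos hpm, o2, o3, zero_mul, zero_mul] at H
        by_cases hp1m : p + 1 ≤ m
        · have o4 : St p i (m - (p + 1)) Q1 = 0 :=
            IH (m - (p + 1)) (by omega) i h2 hip (lt_of_le_of_lt (Nat.sub_le m (p + 1)) hm)
          rw [if_pos hp1m, o4, zero_mul] at H
          simp only [add_zero] at H
          rcases mul_eq_zero.mp H with h | h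
          · exact h
          · exact absurd h (L2_ne_zero p)
        · rw [if_neg hp1m] at H
          simp only [add_zero] at H
          rcases mul_eq_zero.mp H with h | h
          · exact h
          · exact absurd h (L2_ne_zero p)
      · rw [if_neg hpm, if_neg hpm, if_neg (show ¬ p + 1 ≤ m by omega)] at H
        simp only [add_zero] at H
        rcases mul_eq_zero.mp H with h | h
        · exact h
        · exact absurd h (L2_ne_zero p)
    · rw [if_neg h1m, if_neg (show ¬ p ≤ m by omega), if_neg (show ¬ p ≤ m by omega),
        if_neg (show ¬ p + 1 ≤ m by omega)] at H
      simp only [add_zero] at H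
      rcases mul_eq_zero.mp H with h | h
      · exact h
      · exact absurd h (L2_ne_zero p)

end StVanishAux

theorem st_vanish_Q21 (p : ℕ) (hp : p.Prime) (hodd : Odd p)
    (Q0 Q1 : MvPolynomial (Fin 2) (ZMod p))
    (hQ0 : Q0 * L2 p = L20 p) (hQ1 : Q1 * L2 p = L21 p)
    (i k r : ℕ) (hki : k + 1 < i) (hip : i < p) (hrp : r < p) :
    St p i (k * p + r) Q1 = 0 := by
  haveI : Fact p.Prime := ⟨hp⟩
  have h2 : 2 ≤ i := by omega
  apply StVanishAux.vanish p Q1 hQ1 (k * p + r) i h2 hip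
  calc k * p + r < (k + 1) * p := by rw [add_mul, one_mul]; omega
    _ ≤ (i - 1) * p := Nat.mul_le_mul_right p (by omega)
end
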